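/- arXiv:2204.02562 — 2 statements merged into one kernel-verified Lean document; each statement's English description precedes it below -/
import Mathlib

section
/- Let p ∈ (0, 3/4), a_n = Γ(n)Γ(2p)/Γ(n+2p-1), and v_n = Σ_{i=1}^n a_i². Then lim_{n→∞} v_n / n^{3-4p} = Γ(2p)² / (3-4p). -/
open Real Filter

open Topology

lemma gamma_prod {s : ℝ} (hs : 0 < s) (m : ℕ) :
    Real.Gamma s * ∏ j ∈ Finset.range (m+1), (s + j) = Real.Gamma (s + m + 1) := by
  induction m with
  | zero => simp [Real.Gamma_add_one hs.ne', mul_comm]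
  | succ m ih =>
      have key : Real.Gamma (s + (m+1:ℕ) + 1) = (s + m + 1) * Real.Gamma (s + m + 1) := by
        rw [show s + ((m:ℕ)+1:ℕ) + 1 = (s + (m:ℝ) + 1) + 1 by push_cast; ring,
          Real.Gamma_add_one (by positivity)]
      rw [Finset.prod_range_succ, ← mul_assoc, ih, key]
      push_cast; ring

lemma gammaA {s : ℝ} (hs : 0 < s) :
    Tendsto (fun m : ℕ => (m:ℝ)^s * (Nat.factorial m : ℝ) / Real.Gamma (s + m + 1)) atTop (𝓝 1) := by
  have hΓ : 0 < Real.Gamma s := Real.Gamma_pos_of_pos hs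
  have h := (Real.GammaSeq_tendsto_Gamma s).div_const (Real.Gamma s)
  rw [div_self hΓ.ne'] at h
  refine h.congr (fun m => ?_)
  rw [Real.GammaSeq, ← gamma_prod hs m, div_div]
  ring

lemma gammaB {s : ℝ} (hs : -1 < s) :
    Tendsto (fun m : ℕ => (m:ℝ)^s * (Nat.factorial m : ℝ) / Real.Gamma ((m:ℝ) + 1 + s))
      atTop (𝓝 1) := by
  have hA := gammaA (s := s + 1) (by linarith)
  have h2 : Tendsto (fun m : ℕ => ((s : ℝ) + m + 1) / m) atTop (𝓝 1) := by
    have h0 : Tendsto (fun m : ℕ => (1:ℝ) + (s+1)/m) atTop (𝓝 1) := by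
      simpa using tendsto_const_nhds.add (tendsto_const_div_atTop_nhds_zero_nat (s+1))
    refine h0.congr' ?_
    filter_upwards [eventually_gt_atTop 0] with m hm
    have hm' : (0:ℝ) < m := by exact_mod_cast hm
    field_simp
    ring
  have hmul := hA.mul h2
  rw [mul_one] at hmul
  refine hmul.congr' ?_
  filter_upwards [eventually_gt_atTop 0] with m hm
  have hm' : (0:ℝ) < m := by exact_mod_cast hm
  have hΓ : (0:ℝ) < Real.Gamma ((m:ℝ) + 1 + s) := Real.Gamma_pos_of_pos (by linarith)
  have key : Real.Gamma (s + 1 + m + 1) = ((s:ℝ)+m+1) * Real.Gamma ((m:ℝ)+1+s) := by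
    rw [show s + 1 + (m:ℝ) + 1 = ((m:ℝ)+1+s) + 1 by ring, Real.Gamma_add_one (by nlinarith : (0:ℝ) < (m:ℝ)+1+s).ne']
    ring_nf
  rw [key, Real.rpow_add hm' s 1, Real.rpow_one]
  have hsm : ((s:ℝ)+m+1) ≠ 0 := by nlinarith
  field_simp

lemma gammaC {t : ℝ} (ht : 0 < t) :
    Tendsto (fun n : ℕ => Real.Gamma n / (Real.Gamma ((n:ℝ) + t - 1) * (n:ℝ)^(1-t)))
      atTop (𝓝 1) := by
  rw [← tendsto_add_atTop_iff_nat 1]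
  have hs : (-1:ℝ) < t - 1 := by linarith
  have hB := gammaB hs
  have hR : Tendsto (fun m : ℕ => ((m:ℝ)+1)^(t-1) / (m:ℝ)^(t-1)) atTop (𝓝 1) := by
    have h0 : Tendsto (fun m : ℕ => ((1:ℝ) + 1/m)^(t-1)) atTop (𝓝 1) := by
      have h1 : Tendsto (fun m : ℕ => (1:ℝ) + 1/m) atTop (𝓝 1) := by
        simpa using (tendsto_const_nhds (x := (1:ℝ))).add (tendsto_const_div_atTop_nhds_zero_nat (1:ℝ))
      have h2 := (Real.continuousAt_rpow_const 1 (t-1) (Or.inl one_ne_zero)).tendsto.comp h1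
      simpa [Function.comp_def] using h2
    refine h0.congr' ?_
    filter_upwards [eventually_gt_atTop 0] with m hm
    have hm' : (0:ℝ) < m := by exact_mod_cast hm
    rw [← Real.div_rpow (by positivity) hm'.le]
    congr 1
    field_simp
  have hmul := hB.mul hR
  rw [mul_one] at hmul
  refine hmul.congr' ?_
  filter_upwards [eventually_gt_atTop 0] with m hm
  have hm' : (0:ℝ) < m := by exact_mod_cast hm
  have e1 : ((m + 1 : ℕ) : ℝ) = (m:ℝ) + 1 := by push_cast; ring
  have e2 : Real.Gamma ((m+1:ℕ) : ℝ) = (Nat.factorial m : ℝ) := by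
    rw [e1, Real.Gamma_nat_eq_factorial]
  have e3 : ((m+1:ℕ):ℝ) + t - 1 = (m:ℝ) + 1 + (t-1) := by push_cast; ring
  rw [e2, e3, e1]
  have hΓ : (0:ℝ) ≠ Real.Gamma ((m:ℝ) + 1 + (t-1)) := (Real.Gamma_pos_of_pos (by nlinarith)).ne
  have hms : ((m:ℝ)^(t-1)) ≠ 0 := (Real.rpow_pos_of_pos hm' _).ne'
  have hm1 : (((m:ℝ)+1)^(t-1)) ≠ 0 := (Real.rpow_pos_of_pos (by positivity) _).ne'
  rw [show (1-t) = -(t-1) by ring, Real.rpow_neg (by positivity : (0:ℝ) ≤ (m:ℝ)+1)]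
  field_simp

lemma slopeD {s : ℝ} (hs : 0 < s) :
    Tendsto (fun n : ℕ => ((n:ℝ)^s - ((n:ℝ)-1)^s) / (s * (n:ℝ)^(s-1))) atTop (𝓝 1) := by
  have hd1 : HasDerivAt (fun x : ℝ => 1 - x) (-1) 0 := (hasDerivAt_id 0).const_sub 1
  have hd2 : HasDerivAt (fun x : ℝ => x ^ s) (s * (1:ℝ) ^ (s-1)) 1 :=
    Real.hasDerivAt_rpow_const (Or.inl one_ne_zero)
  have hd : HasDerivAt (fun x : ℝ => (1 - x) ^ s) (-s) 0 := by
    have hd2' : HasDerivAt (fun x : ℝ => x ^ s) (s * (1:ℝ) ^ (s-1)) ((1:ℝ) - (0:ℝ)) := by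
      simpa using hd2
    have := HasDerivAt.comp (0:ℝ) hd2' hd1
    simpa [Real.one_rpow, Function.comp_def] using this
  have hslope := hasDerivAt_iff_tendsto_slope.mp hd
  have hcomp : Tendsto (fun m : ℕ => 1/(m:ℝ)) atTop (𝓝[≠] 0) := by
    rw [tendsto_nhdsWithin_iff]
    refine ⟨by exact tendsto_one_div_atTop_nhds_zero_nat, ?_⟩
    filter_upwards [eventually_gt_atTop 0] with m hm
    have hm' : (0:ℝ) < m := by exact_mod_cast hm
    simp [Set.mem_compl_iff, hm'.ne']
  have hψ := hslope.comp hcomp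
  have hfin := hψ.const_mul (-1/s)
  have : (-1/s) * (-s) = 1 := by field_simp
  rw [this] at hfin
  refine hfin.congr' ?_
  filter_upwards [eventually_gt_atTop 0] with n hn
  have hn' : (0:ℝ) < n := by exact_mod_cast hn
  have hn1 : (1:ℝ) ≤ n := by exact_mod_cast hn
  simp only [Function.comp_apply, slope_def_field]
  have e1 : ((n:ℝ)-1)^s = (n:ℝ)^s * (1 - 1/n)^s := by
    rw [← Real.mul_rpow hn'.le (by rw [sub_nonneg]; exact (div_le_one hn').mpr hn1)]
    congr 1
    field_simp
  have e2 : (n:ℝ)^(s-1) = (n:ℝ)^s / n := by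
    rw [Real.rpow_sub hn', Real.rpow_one]
  have hns : ((n:ℝ)^s) ≠ 0 := (Real.rpow_pos_of_pos hn' _).ne'
  rw [e1, e2]
  have h1n : (1:ℝ)/(n:ℝ) ≠ 0 := by positivity
  field_simp
  simp only [sub_zero, mul_zero, Real.one_rpow]; ring

/-- For `p ∈ (0, 3/4)`, `a_n = Γ(n)Γ(2p)/Γ(n+2p-1)` and `v_n = Σ_{i=1}^n a_i²`, one has
`lim_{n→∞} v_n / n^{3-4p} = Γ(2p)²/(3-4p)`. -/
theorem erw_sum_sq_norming_asymptotics (p : ℝ) (hp : p ∈ Set.Ioo (0 : ℝ) (3 / 4)) :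
    Tendsto
      (fun n : ℕ =>
        (∑ i ∈ Finset.Icc 1 n,
            (Real.Gamma i * Real.Gamma (2 * p) / Real.Gamma ((i : ℝ) + 2 * p - 1)) ^ 2) /
          (n : ℝ) ^ (3 - 4 * p))
      atTop (nhds (Real.Gamma (2 * p) ^ 2 / (3 - 4 * p))) := by
  obtain ⟨hp0, hp34⟩ := hp
  have hs : (0:ℝ) < 3 - 4 * p := by linarith
  set L : ℝ := Real.Gamma (2 * p) ^ 2 with hL
  set e : ℕ → ℝ := fun i =>
    (Real.Gamma i * Real.Gamma (2 * p) / Real.Gamma ((i : ℝ) + 2 * p - 1)) ^ 2 with he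
  set D : ℕ → ℝ := fun n => (n:ℝ) ^ (3 - 4 * p) / (3 - 4 * p) with hD
  set g : ℕ → ℝ := fun i => D i - D (i - 1) with hg
  set f : ℕ → ℝ := fun i => e i - L * g i with hf
  -- basic facts
  have he0 : e 0 = 0 := by simp [he, Real.Gamma_zero]
  have hD0 : D 0 = 0 := by simp [hD, Real.zero_rpow hs.ne']
  have hcast : ∀ i : ℕ, 1 ≤ i → ((i - 1 : ℕ) : ℝ) = (i:ℝ) - 1 := by
    intro i hi; push_cast [hi]; ring
  have hgpos : ∀ i : ℕ, 1 ≤ i → 0 < g i := by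
    intro i hi
    have h1 : ((i - 1 : ℕ) : ℝ) < (i : ℝ) := by rw [hcast i hi]; linarith
    have h2 : ((i - 1 : ℕ) : ℝ) ^ (3 - 4*p) < (i:ℝ) ^ (3 - 4*p) :=
      Real.rpow_lt_rpow (by positivity) h1 hs
    simp only [hg, hD]
    rw [div_sub_div_same]
    exact div_pos (by linarith) hs
  have hgnonneg : ∀ i : ℕ, 0 ≤ g i := by
    intro i
    rcases Nat.eq_zero_or_pos i with h | h
    · simp [hg, h]
    · exact (hgpos i h).le
  -- per-term asymptotics, part (a)
  have hA : Tendsto (fun i : ℕ => e i / (i:ℝ) ^ (2 - 4*p)) atTop (𝓝 L) := by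
    have hc := gammaC (t := 2*p) (by linarith)
    have h2 := (hc.mul hc).const_mul L
    simp only [mul_one] at h2
    refine h2.congr' ?_
    filter_upwards [eventually_ge_atTop 1] with i hi
    have hi0 : (0:ℝ) < i := by exact_mod_cast hi
    have hi1 : (1:ℝ) ≤ i := by exact_mod_cast hi
    have hΓ : (0:ℝ) < Real.Gamma ((i:ℝ) + 2*p - 1) := Real.Gamma_pos_of_pos (by linarith)
    have hx : (0:ℝ) < (i:ℝ) ^ (1 - 2*p) := Real.rpow_pos_of_pos hi0 _
    have hexp : (i:ℝ) ^ (2 - 4*p) = (i:ℝ) ^ (1 - 2*p) * (i:ℝ) ^ (1 - 2*p) := by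
      rw [← Real.rpow_add hi0]; congr 1; ring
    simp only [he]
    rw [hexp]
    field_simp
    ring
  -- per-term asymptotics, part (b)
  have hB : Tendsto (fun i : ℕ => (i:ℝ) ^ (2 - 4*p) / g i) atTop (𝓝 1) := by
    have hφ := (slopeD hs).inv₀ one_ne_zero
    rw [inv_one] at hφ
    refine hφ.congr' ?_
    filter_upwards [eventually_ge_atTop 1] with i hi
    have hi0 : (0:ℝ) < i := by exact_mod_cast hi
    have hi1 : (1:ℝ) ≤ i := by exact_mod_cast hi
    have hAB : (0:ℝ) < (i:ℝ) ^ (3-4*p) - ((i:ℝ) - 1) ^ (3-4*p) := by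
      have := Real.rpow_lt_rpow (x := (i:ℝ)-1) (y := (i:ℝ)) (by linarith) (by linarith) hs
      linarith
    have hC : (0:ℝ) < (i:ℝ) ^ (2 - 4*p) := Real.rpow_pos_of_pos hi0 _
    simp only [hg, hD, hcast i hi]
    rw [show (3-4*p) - 1 = 2 - 4*p by ring]
    rw [div_sub_div_same, inv_div]
    have h1 := hAB.ne'
    have h2 := hC.ne'
    have h3 := hs.ne'
    field_simp
  have hterm : Tendsto (fun i : ℕ => e i / g i) atTop (𝓝 L) := by
    have := hA.mul hB
    rw [mul_one] at this
    refine this.congr' ?_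
    filter_upwards [eventually_ge_atTop 1] with i hi
    have hi0 : (0:ℝ) < i := by exact_mod_cast hi
    have hC : ((i:ℝ) ^ (2 - 4*p)) ≠ 0 := (Real.rpow_pos_of_pos hi0 _).ne'
    rw [div_mul_div_comm, mul_comm ((i:ℝ) ^ (2-4*p)), mul_div_mul_right _ _ hC]
  -- f is little-o of g
  have hfo : f =o[atTop] g := by
    rw [Asymptotics.isLittleO_iff_tendsto' ?hgf]
    case hgf =>
      filter_upwards [eventually_ge_atTop 1] with i hi h0
      exact absurd h0 (hgpos i hi).ne'
    have h0 := hterm.sub_const L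
    rw [sub_self] at h0
    refine h0.congr' ?_
    filter_upwards [eventually_ge_atTop 1] with i hi
    have hgi : g i ≠ 0 := (hgpos i hi).ne'
    simp only [hf]
    rw [sub_div, mul_div_assoc, div_self hgi, mul_one]
  -- telescoping
  have hT : ∀ n : ℕ, ∑ i ∈ Finset.range (n+1), g i = D n := by
    intro n
    rw [Finset.sum_range_succ']
    have hg0 : g 0 = 0 := by simp [hg]
    have hgs : ∀ i : ℕ, g (i+1) = D (i+1) - D i := by intro i; simp [hg]
    rw [hg0, add_zero, Finset.sum_congr rfl (fun i _ => hgs i), Finset.sum_range_sub D, hD0,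
      sub_zero]
  have hsum : Tendsto (fun n => ∑ i ∈ Finset.range n, g i) atTop atTop := by
    have hDtop : Tendsto D atTop atTop := by
      apply Tendsto.atTop_div_const hs
      exact (tendsto_rpow_atTop hs).comp tendsto_natCast_atTop_atTop
    apply (tendsto_add_atTop_iff_nat 1).mp
    exact hDtop.congr fun n => (hT n).symm
  have ho := hfo.sum_range hgnonneg hsum
  have ho1 : (fun n => ∑ i ∈ Finset.range (n+1), f i) =o[atTop] D := by
    have h2 := ho.comp_tendsto (tendsto_add_atTop_nat 1)
    exact h2.congr (fun n => rfl) (fun n => hT n)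
  have hins : ∀ n : ℕ, Finset.range (n+1) = insert 0 (Finset.Icc 1 n) := by
    intro n; ext i
    simp only [Finset.mem_range, Finset.mem_insert, Finset.mem_Icc]
    omega
  have hV : ∀ n : ℕ, ∑ i ∈ Finset.range (n+1), f i
      = (∑ i ∈ Finset.Icc 1 n, e i) - L * D n := by
    intro n
    have h1 : ∑ i ∈ Finset.range (n+1), f i
        = (∑ i ∈ Finset.range (n+1), e i) - L * ∑ i ∈ Finset.range (n+1), g i := by
      simp [hf, Finset.sum_sub_distrib, Finset.mul_sum]
    rw [h1, hT, hins, Finset.sum_insert (by simp), he0, zero_add]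
  have hdiv := ho1.tendsto_div_nhds_zero
  have hDpos : ∀ n : ℕ, 1 ≤ n → 0 < D n := by
    intro n hn
    have hn0 : (0:ℝ) < n := by exact_mod_cast hn
    exact div_pos (Real.rpow_pos_of_pos hn0 _) hs
  have h0 : Tendsto (fun n => (∑ i ∈ Finset.Icc 1 n, e i) / D n - L) atTop (𝓝 0) := by
    refine hdiv.congr' ?_
    filter_upwards [eventually_ge_atTop 1] with n hn
    rw [hV n, sub_div, mul_div_assoc, div_self (hDpos n hn).ne', mul_one]
  have hVD : Tendsto (fun n => (∑ i ∈ Finset.Icc 1 n, e i) / D n) atTop (𝓝 L) := by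
    have := h0.add (tendsto_const_nhds (x := L))
    rw [zero_add] at this
    exact this.congr fun n => by ring
  have hfin := hVD.div_const (3 - 4*p)
  refine hfin.congr' ?_
  filter_upwards [eventually_ge_atTop 1] with n hn
  have hn0 : (0:ℝ) < n := by exact_mod_cast hn
  have hns : ((n:ℝ) ^ (3 - 4*p)) ≠ 0 := (Real.rpow_pos_of_pos hn0 _).ne'
  simp only [hD]
  field_simp
end

section
/- Let p = 3/4, a_n = Γ(n)Γ(3/2)/Γ(n+1/2), and v_n = Σ_{i=1}^n a_i². Then lim_{n→∞} v_n / ln n = π/4. -/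
open Real Filter Asymptotics Finset Topology

noncomputable def erwC (i : ℕ) : ℝ :=
  (Real.Gamma i * Real.Gamma (3 / 2) / Real.Gamma ((i : ℝ) + 1 / 2)) ^ 2

lemma erw_gamma_three_halves : Real.Gamma (3/2) = Real.sqrt π / 2 := by
  rw [show (3/2:ℝ) = 1/2 + 1 by norm_num, Real.Gamma_add_one (by norm_num),
    Real.Gamma_one_half_eq]
  ring

lemma erw_prodGamma (n : ℕ) :
    Real.Gamma ((n:ℝ) + 3/2) = (∏ j ∈ Finset.range (n+1), ((1:ℝ)/2 + j)) * Real.Gamma (1/2) := by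
  induction n with
  | zero =>
    simp only [Nat.cast_zero, zero_add, Finset.prod_range_one, Nat.cast_zero, add_zero]
    rw [show (3/2:ℝ) = 1/2 + 1 by norm_num, Real.Gamma_add_one (by norm_num)]
  | succ n ih =>
    have h : ((n+1:ℕ):ℝ) + 3/2 = ((n:ℝ) + 3/2) + 1 := by push_cast; ring
    rw [h, Real.Gamma_add_one (by positivity), ih]
    have hc : (1:ℝ)/2 + ((n+1:ℕ):ℝ) = (n:ℝ) + 3/2 := by push_cast; ring
    rw [Finset.prod_range_succ _ (n+1), hc]
    ring

lemma erw_y_tendsto :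
    Tendsto (fun n : ℕ => (n:ℝ) ^ ((1:ℝ)/2) * Real.Gamma ((n:ℝ)+1) / Real.Gamma ((n:ℝ)+3/2))
      atTop (𝓝 1) := by
  have h0 : Real.Gamma (1/2) ≠ 0 := by
    rw [Real.Gamma_one_half_eq]; positivity
  have h := (Real.GammaSeq_tendsto_Gamma (1/2)).div_const (Real.Gamma (1/2))
  rw [div_self h0] at h
  apply h.congr
  intro n
  have hp : 0 < Real.Gamma ((n:ℝ) + 3/2) := Real.Gamma_pos_of_pos (by positivity)
  rw [Real.GammaSeq, show (∏ j ∈ Finset.range (n+1), ((1:ℝ)/2 + j))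
      = Real.Gamma ((n:ℝ) + 3/2) / Real.Gamma (1/2) by
        rw [erw_prodGamma n]; field_simp,
    Real.Gamma_nat_eq_factorial]
  field_simp

lemma erw_key : Tendsto (fun i : ℕ => ((i:ℝ)+1) * erwC (i+1)) atTop (𝓝 (π/4)) := by
  have hy := erw_y_tendsto
  have h1 : Tendsto (fun i : ℕ => ((i:ℝ)+1)/i) atTop (𝓝 1) := by
    have := (tendsto_const_div_atTop_nhds_zero_nat (1:ℝ)).const_add 1
    simp only [add_zero] at this
    apply this.congr'
    filter_upwards [eventually_gt_atTop 0] with i hi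
    have : (i:ℝ) ≠ 0 := Nat.cast_ne_zero.2 hi.ne'
    field_simp
  have h2 : Tendsto (fun i : ℕ => (π/4) * (((i:ℝ)+1)/i) *
      ((i:ℝ) ^ ((1:ℝ)/2) * Real.Gamma ((i:ℝ)+1) / Real.Gamma ((i:ℝ)+3/2))^2)
      atTop (𝓝 (π/4)) := by
    have := ((h1.const_mul (π/4)).mul ((hy.mul hy)))
    simp only [mul_one] at this
    apply this.congr
    intro i
    ring
  apply h2.congr'
  filter_upwards [eventually_gt_atTop 0] with i hi
  have hne : (i:ℝ) ≠ 0 := Nat.cast_ne_zero.2 hi.ne'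
  have hsq : ((i:ℝ) ^ ((1:ℝ)/2))^2 = (i:ℝ) := by
    rw [← Real.rpow_natCast ((i:ℝ) ^ ((1:ℝ)/2)) 2, ← Real.rpow_mul (Nat.cast_nonneg i)]
    norm_num
  have hΓ2 : Real.Gamma (3/2) ^ 2 = π/4 := by
    rw [erw_gamma_three_halves, div_pow, Real.sq_sqrt Real.pi_pos.le]
    norm_num
  have hc : ((i+1:ℕ):ℝ) + 1/2 = (i:ℝ) + 3/2 := by push_cast; ring
  have hΓp : Real.Gamma ((i:ℝ)+3/2) ≠ 0 := (Real.Gamma_pos_of_pos (by positivity)).ne'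
  have e1 : ((i:ℝ) ^ ((1:ℝ)/2) * Real.Gamma ((i:ℝ) + 1) / Real.Gamma ((i:ℝ) + 3/2)) ^ 2
      = (i:ℝ) * Real.Gamma ((i:ℝ)+1)^2 / Real.Gamma ((i:ℝ)+3/2)^2 := by
    rw [div_pow, mul_pow, hsq]
  have e2 : (Real.Gamma ((i:ℝ)+1) * Real.Gamma (3/2) / Real.Gamma ((i:ℝ) + 3/2)) ^ 2
      = Real.Gamma ((i:ℝ)+1)^2 * (π/4) / Real.Gamma ((i:ℝ)+3/2)^2 := by
    rw [div_pow, mul_pow, hΓ2]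
  rw [erwC, hc]
  push_cast
  rw [e1, e2]
  field_simp

/-- For `p = 3/4`, `a_n = Γ(n)Γ(3/2)/Γ(n+1/2)` and `v_n = Σ_{i=1}^n a_i²`, one has
`lim_{n→∞} v_n / ln n = π/4`. -/
theorem erw_critical_sum_sq_asymptotics :
    Tendsto
      (fun n : ℕ =>
        (∑ i ∈ Finset.Icc 1 n,
            (Real.Gamma i * Real.Gamma (3 / 2) / Real.Gamma ((i : ℝ) + 1 / 2)) ^ 2) /
          Real.log n)
      atTop (nhds (Real.pi / 4)) := by
  set g : ℕ → ℝ := fun i => ((i:ℝ)+1)⁻¹ with hgdef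
  have hgpos : ∀ i, 0 < g i := fun i => by positivity
  have hsumg : ∀ n, ∑ i ∈ range n, g i = (harmonic n : ℝ) := by
    intro n
    rw [harmonic]
    push_cast
    rfl
  have hlog : Tendsto (fun n : ℕ => Real.log n) atTop atTop :=
    Real.tendsto_log_atTop.comp tendsto_natCast_atTop_atTop
  have hharm_top : Tendsto (fun n : ℕ => (harmonic n : ℝ)) atTop atTop := by
    have := Real.tendsto_harmonic_sub_log.add_atTop hlog
    apply this.congr
    intro n
    simp
  have hharm_log : Tendsto (fun n : ℕ => (harmonic n : ℝ) / Real.log n) atTop (𝓝 1) := by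
    have h1 := (Real.tendsto_harmonic_sub_log.mul hlog.inv_tendsto_atTop).add
      (tendsto_const_nhds : Tendsto (fun _ : ℕ => (1:ℝ)) atTop (𝓝 1))
    rw [mul_zero, zero_add] at h1
    apply h1.congr'
    filter_upwards [eventually_ge_atTop 2] with n hn
    have hlogne : Real.log n ≠ 0 := by
      have : (1:ℝ) < (n:ℝ) := by exact_mod_cast Nat.lt_of_lt_of_le Nat.one_lt_two hn
      exact (Real.log_pos this).ne'
    simp only [Pi.inv_apply]
    field_simp
    ring
  set f : ℕ → ℝ := fun i => erwC (i+1) - (π/4) * g i with hfdef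
  have hfo : f =o[atTop] g := by
    apply Asymptotics.isLittleO_of_tendsto (fun x hx => absurd hx (hgpos x).ne')
    have h0 : Tendsto (fun i : ℕ => ((i:ℝ)+1) * erwC (i+1) - π/4) atTop (𝓝 0) := by
      simpa using erw_key.sub_const (π/4)
    apply h0.congr
    intro i
    have hne : ((i:ℝ)+1) ≠ 0 := by positivity
    simp only [hfdef, hgdef]
    field_simp
  have hsum := hfo.sum_range (fun i => (hgpos i).le)
    (hharm_top.congr fun n => (hsumg n).symm)
  have hdiv0 : Tendsto (fun n : ℕ => (∑ i ∈ range n, f i) / Real.log n) atTop (𝓝 0) := by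
    have t1 := hsum.tendsto_div_nhds_zero
    have t2 := t1.mul hharm_log
    rw [zero_mul] at t2
    apply t2.congr'
    filter_upwards [eventually_ge_atTop 1] with n hn
    have hne : (harmonic n : ℝ) ≠ 0 := by
      exact_mod_cast (harmonic_pos (Nat.one_le_iff_ne_zero.mp hn)).ne'
    rw [hsumg n, div_mul_div_comm, mul_comm (∑ i ∈ range n, f i) ((harmonic n : ℝ)),
      mul_div_mul_left _ _ hne]
  have hmain : Tendsto (fun n : ℕ =>
      (∑ i ∈ range n, f i) / Real.log n + (π/4) * ((harmonic n : ℝ) / Real.log n))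
      atTop (𝓝 (π/4)) := by
    have := hdiv0.add (hharm_log.const_mul (π/4))
    simpa using this
  apply hmain.congr
  intro n
  have hIcc : (∑ i ∈ Finset.Icc 1 n,
      (Real.Gamma i * Real.Gamma (3 / 2) / Real.Gamma ((i : ℝ) + 1 / 2)) ^ 2)
      = ∑ i ∈ range n, erwC (i+1) := by
    rw [← Finset.Ico_add_one_right_eq_Icc, Finset.sum_Ico_eq_sum_range]
    simp only [Nat.add_sub_cancel, erwC]
    exact Finset.sum_congr rfl fun i _ => by rw [Nat.add_comm 1 i]
  have hsplit : ∑ i ∈ range n, erwC (i+1)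
      = (∑ i ∈ range n, f i) + (π/4) * (harmonic n : ℝ) := by
    simp only [hfdef, Finset.sum_sub_distrib, ← Finset.mul_sum, hsumg n]
    ring
  rw [hIcc, hsplit, add_div, mul_div_assoc]
end
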